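/- arXiv:2207.06648 — 2 statements merged into one kernel-verified Lean document; each statement's English description precedes it below -/
import Mathlib

section
/- Assume P^s, P^u, P^c are continuous on K and let X be a continuous vector field on K. Define η : K → ℝ by P^c(x)X(x) = η(x)F(x), and v(x) := ∫₀^∞ Dφ^t(φ^{-t}x) P^s(φ^{-t}x) X(φ^{-t}x) dt − ∫₀^∞ Dφ^{-t}(φ^{t}x) P^u(φ^{t}x) X(φ^{t}x) dt. Then both integrals converge absolutely, v and η are bounded and continuous on K, and (v, η) is a shadowing pair for X: along every orbit x_t := φ^t(x₀) in K, t ↦ v(x_t) is differentiable and d/dt v(x_t) = DF(x_t) v(x_t) − η(x_t) F(x_t) + X(x_t). -/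
/-!
Hyperbolicity bounds both integrands by `C λᵗ` uniformly on `K`, so the integrals converge and, by
dominated convergence, depend continuously on the base point; `η` is continuous because `F` does
not vanish on `K`. Writing `φᵗ_* W` for the pushforward of a vector field, the flow property gives
`∫₀^∞ (φᵗ_* W)(φˢ x) dt = Dφˢ(x) ∫_{-s}^∞ (φʳ_* W)(x) dr`, so by the variational equation
`∂ₛ Dφˢ = DF(φˢ) ∘ Dφˢ` the map `s ↦ ∫₀^∞ (φᵗ_* W)(φˢ x) dt` solves `u' = DF u + W`. The unstable
integral is the same object for the time-reversed flow, where `W` enters with the opposite sign, so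
`v` solves `u' = DF u + Pˢ X + Pᵘ X = DF u - η F + X`.
-/

open Function Set Filter MeasureTheory Topology Metric

section

variable {E : Type*} [NormedAddCommGroup E]

section HalfLine

variable {g : ℝ → E}

theorem IntegrableOn.comp_sub_right_Ioi {a c : ℝ} (hg : IntegrableOn g (Ioi (a - c))) :
    IntegrableOn (fun τ => g (τ - c)) (Ioi a) := by
  have := ((measurePreserving_sub_right volume c).restrict_preimage_emb
    (MeasurableEquiv.subRight c).measurableEmbedding (Ioi (a - c))).integrable_comp_emb
    (MeasurableEquiv.subRight c).measurableEmbedding (g := g)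
  rw [preimage_sub_const_Ioi, sub_add_cancel] at this
  exact this.2 hg

theorem Continuous.integrableOn_Ioi_of_integrableOn_Ioi (hg : Continuous g) {a : ℝ}
    (ha : IntegrableOn g (Ioi a)) (b : ℝ) : IntegrableOn g (Ioi b) := by
  rcases le_total a b with hab | hba
  · exact ha.mono_set (Ioi_subset_Ioi hab)
  · exact Ioc_union_Ioi_eq_Ioi hba ▸ hg.integrableOn_Ioc.union ha

theorem integrableOn_Ioi_rpow_of_lt_one {lam : ℝ} (h0 : 0 < lam) (h1 : lam < 1) (a : ℝ) :
    IntegrableOn (fun t : ℝ => lam ^ t) (Ioi a) := by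
  simp_rw [Real.rpow_def_of_pos h0]
  exact integrableOn_exp_mul_Ioi (Real.log_neg h0 h1) a

variable [NormedSpace ℝ E]

theorem setIntegral_Ioi_comp_sub_right (g : ℝ → E) (a c : ℝ) :
    ∫ τ in Ioi a, g (τ - c) = ∫ y in Ioi (a - c), g y := by
  have := (measurePreserving_sub_right volume c).setIntegral_preimage_emb
    (MeasurableEquiv.subRight c).measurableEmbedding g (Ioi (a - c))
  rwa [preimage_sub_const_Ioi, sub_add_cancel] at this

theorem hasDerivAt_setIntegral_Ioi [CompleteSpace E] (hg : Continuous g) {a : ℝ}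
    (ha : IntegrableOn g (Ioi a)) : HasDerivAt (fun b => ∫ r in Ioi b, g r) (-g a) a := by
  have hsplit : ∀ b, ∫ r in Ioi b, g r = (∫ r in Ioi a, g r) - ∫ r in a..b, g r := fun b => by
    rw [← intervalIntegral.integral_Ioi_sub_Ioi' ha
      (hg.integrableOn_Ioi_of_integrableOn_Ioi ha b), sub_sub_cancel]
  rw [funext hsplit]
  exact (hg.integral_hasStrictDerivAt a a).hasDerivAt.const_sub _

end HalfLine

variable [NormedSpace ℝ E]

structure IsC1Flow (F : E → E) (φ : ℝ → E → E) : Prop where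
  zero : ∀ x, φ 0 x = x
  add : ∀ s t x, φ (s + t) x = φ s (φ t x)
  hasDerivAt : ∀ x t, HasDerivAt (fun s => φ s x) (F (φ t x)) t
  contDiff : ∀ t, ContDiff ℝ 1 (φ t)
  continuous_fderiv : Continuous fun p : ℝ × E => fderiv ℝ (φ p.1) p.2

namespace IsC1Flow

variable {F : E → E} {φ : ℝ → E → E}

theorem neg_apply_apply (h : IsC1Flow F φ) (t : ℝ) (x : E) : φ (-t) (φ t x) = x := by
  rw [← h.add, neg_add_cancel, h.zero]

theorem apply_neg_apply (h : IsC1Flow F φ) (t : ℝ) (x : E) : φ t (φ (-t) x) = x := by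
  simpa using h.neg_apply_apply (-t) x

theorem continuous_apply (h : IsC1Flow F φ) (x : E) : Continuous fun t => φ t x :=
  continuous_iff_continuousAt.2 fun t => (h.hasDerivAt x t).continuousAt

theorem differentiable (h : IsC1Flow F φ) (t : ℝ) : Differentiable ℝ (φ t) :=
  (h.contDiff t).differentiable one_ne_zero

theorem fderiv_add (h : IsC1Flow F φ) (a b : ℝ) (y : E) :
    fderiv ℝ (φ (a + b)) y = (fderiv ℝ (φ a) (φ b y)).comp (fderiv ℝ (φ b) y) := by
  rw [show φ (a + b) = φ a ∘ φ b from funext (h.add a b),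
    fderiv_comp y (h.differentiable a _) (h.differentiable b y)]

theorem fderiv_zero (h : IsC1Flow F φ) (y : E) :
    fderiv ℝ (φ 0) y = ContinuousLinearMap.id ℝ E := by
  rw [show φ 0 = id from funext h.zero, fderiv_id]

/-- Near `(t₀, x₀)` the derivative of `φ t` is bounded, so the maps `φ t` are Lipschitz near `x₀`
with one constant, and continuity in `t` upgrades to joint continuity. -/
theorem continuous_uncurry (h : IsC1Flow F φ) : Continuous fun p : ℝ × E => φ p.1 p.2 := by
  refine continuous_iff_continuousAt.2 fun ⟨t₀, x₀⟩ => ?_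
  set N := ‖fderiv ℝ (φ t₀) x₀‖ + 1
  obtain ⟨ε, hε, hN⟩ := eventually_nhds_iff_ball.1
    (h.continuous_fderiv.continuousAt.norm.eventually (gt_mem_nhds (lt_add_one _)) :
      ∀ᶠ p : ℝ × E in 𝓝 (t₀, x₀), ‖fderiv ℝ (φ p.1) p.2‖ < N)
  have hLip : ∀ t ∈ ball t₀ ε, LipschitzOnWith N.toNNReal (φ t) (ball x₀ ε) :=
    fun t ht => (convex_ball x₀ ε).lipschitzOnWith_of_nnnorm_fderiv_le
      (fun z _ => h.differentiable t z) fun z hz => by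
        rw [← NNReal.coe_le_coe, coe_nnnorm]
        exact (hN (t, z) (ball_prod_same t₀ x₀ ε ▸ ⟨ht, hz⟩)).le.trans
          (Real.le_coe_toNNReal N)
  exact (continuousOn_prod_of_continuousOn_lipschitzOnWith' (fun p : ℝ × E => φ p.1 p.2) _ hLip
    fun x _ => (h.continuous_apply x).continuousOn).continuousAt
    (prod_mem_nhds (ball_mem_nhds t₀ hε) (ball_mem_nhds x₀ hε))

theorem apply_eq_add_integral [CompleteSpace E] (h : IsC1Flow F φ) (hF : Continuous F)
    (t : ℝ) (x : E) :
    φ t x = x + ∫ u in (0 : ℝ)..t, F (φ u x) := by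
  rw [intervalIntegral.integral_eq_sub_of_hasDerivAt (fun u _ => h.hasDerivAt x u)
    ((hF.comp (h.continuous_apply x)).intervalIntegrable 0 t), h.zero, add_sub_cancel]

theorem continuous_fderiv_comp (h : IsC1Flow F φ) (hF : ContDiff ℝ 1 F) :
    Continuous fun p : ℝ × E => (fderiv ℝ F (φ p.1 p.2)).comp (fderiv ℝ (φ p.1) p.2) :=
  ((hF.continuous_fderiv one_ne_zero).comp h.continuous_uncurry).clm_comp h.continuous_fderiv

/-- Differentiating `φ t x = x + ∫₀ᵗ F (φ u x) du` in `x` under the integral sign. -/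
theorem fderiv_eq_id_add_integral [CompleteSpace E] (h : IsC1Flow F φ) (hF : ContDiff ℝ 1 F)
    (t : ℝ) (x : E) :
    fderiv ℝ (φ t) x = ContinuousLinearMap.id ℝ E +
      ∫ u in (0 : ℝ)..t, (fderiv ℝ F (φ u x)).comp (fderiv ℝ (φ u) x) := by
  have hΦ := h.continuous_fderiv_comp hF
  have hΦx : Continuous fun u => (fderiv ℝ F (φ u x)).comp (fderiv ℝ (φ u) x) :=
    hΦ.comp (continuous_id.prodMk continuous_const)
  obtain ⟨N, hN⟩ :=
    isCompact_uIcc.exists_bound_of_continuousOn (hΦx.continuousOn (s := uIcc 0 t))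
  have hnear : ∀ᶠ z in 𝓝 x, ∀ u ∈ uIcc 0 t,
      ‖(fderiv ℝ F (φ u z)).comp (fderiv ℝ (φ u) z)‖ < N + 1 :=
    isCompact_uIcc.eventually_forall_of_forall_eventually fun u hu =>
      ((hΦ.comp continuous_swap).norm.tendsto (x, u)).eventually
        (gt_mem_nhds ((hN u hu).trans_lt (lt_add_one N)))
  have hcont : ∀ z, Continuous fun u => F (φ u z) :=
    fun z => hF.continuous.comp (h.continuous_apply z)
  have hint : HasFDerivAt (fun z => ∫ u in (0 : ℝ)..t, F (φ u z))
      (∫ u in (0 : ℝ)..t, (fderiv ℝ F (φ u x)).comp (fderiv ℝ (φ u) x)) x := by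
    refine intervalIntegral.hasFDerivAt_integral_of_dominated_of_fderiv_le
      (bound := fun _ => N + 1) hnear
      (Eventually.of_forall fun z => (hcont z).aestronglyMeasurable)
      ((hcont x).intervalIntegrable 0 t) hΦx.aestronglyMeasurable
      (Eventually.of_forall fun u hu z hz => (hz u (uIoc_subset_uIcc hu)).le)
      intervalIntegrable_const (Eventually.of_forall fun u _ z _ => ?_)
    exact (hF.differentiable one_ne_zero (φ u z)).hasFDerivAt.comp z
      (h.differentiable u z).hasFDerivAt
  have hφt : φ t = id + fun z => ∫ u in (0 : ℝ)..t, F (φ u z) :=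
    funext fun z => h.apply_eq_add_integral hF.continuous t z
  rw [hφt]
  exact ((hasFDerivAt_id x).add hint).fderiv

theorem hasDerivAt_fderiv [CompleteSpace E] (h : IsC1Flow F φ) (hF : ContDiff ℝ 1 F)
    (x : E) (t : ℝ) :
    HasDerivAt (fun s => fderiv ℝ (φ s) x) ((fderiv ℝ F (φ t x)).comp (fderiv ℝ (φ t) x)) t := by
  have hc : Continuous fun u => (fderiv ℝ F (φ u x)).comp (fderiv ℝ (φ u) x) :=
    (h.continuous_fderiv_comp hF).comp (continuous_id.prodMk continuous_const)
  rw [funext (h.fderiv_eq_id_add_integral hF · x)]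
  simpa using (hc.integral_hasStrictDerivAt 0 t).hasDerivAt.const_add (ContinuousLinearMap.id ℝ E)

theorem reverse (h : IsC1Flow F φ) : IsC1Flow (-F) fun t => φ (-t) where
  zero x := by simpa using h.zero x
  add s t x := by rw [neg_add]; exact h.add (-s) (-t) x
  hasDerivAt x t := by simpa [comp_def] using (h.hasDerivAt x (-t)).scomp t (hasDerivAt_neg t)
  contDiff t := h.contDiff (-t)
  continuous_fderiv := h.continuous_fderiv.comp (continuous_fst.neg.prodMk continuous_snd)

end IsC1Flow

noncomputable def pushforward (φ : ℝ → E → E) (t : ℝ) (W : E → E) (x : E) : E :=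
  fderiv ℝ (φ t) (φ (-t) x) (W (φ (-t) x))

theorem pushforward_reverse (φ : ℝ → E → E) (t : ℝ) (W : E → E) (x : E) :
    pushforward (fun s => φ (-s)) t W x = fderiv ℝ (φ (-t)) (φ t x) (W (φ t x)) := by
  simp only [pushforward, neg_neg]

namespace IsC1Flow

variable {F : E → E} {φ : ℝ → E → E}

theorem pushforward_zero (h : IsC1Flow F φ) (W : E → E) (x : E) :
    pushforward φ 0 W x = W x := by
  simp only [pushforward, neg_zero, h.zero, h.fderiv_zero, ContinuousLinearMap.id_apply]

theorem pushforward_apply (h : IsC1Flow F φ) (W : E → E) (r s : ℝ) (x : E) :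
    pushforward φ r W (φ s x) = fderiv ℝ (φ s) x (pushforward φ (r - s) W x) := by
  have hbase : φ (-r) (φ s x) = φ (-(r - s)) x := by rw [← h.add]; congr 1; ring
  have hcocycle := h.fderiv_add s (r - s) (φ (-(r - s)) x)
  rw [add_sub_cancel, h.apply_neg_apply] at hcocycle
  rw [pushforward, pushforward, hbase, hcocycle, ContinuousLinearMap.comp_apply]

theorem fderiv_apply_pushforward_neg (h : IsC1Flow F φ) (W : E → E) (t : ℝ) (x : E) :
    fderiv ℝ (φ t) x (pushforward φ (-t) W x) = W (φ t x) := by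
  rw [← zero_sub t, ← h.pushforward_apply, h.pushforward_zero]

variable {K : Set E} {W : E → E} {bound : ℝ → ℝ}

theorem continuous_pushforward (h : IsC1Flow F φ) (hK : ∀ t, MapsTo (φ t) K K)
    (hW : ContinuousOn W K) {x : E} (hx : x ∈ K) : Continuous fun t => pushforward φ t W x := by
  have hback : Continuous fun t => φ (-t) x := (h.continuous_apply x).comp continuous_neg
  exact (h.continuous_fderiv.comp (continuous_id.prodMk hback)).clm_apply
    (hW.comp_continuous hback fun t => hK (-t) hx)

theorem continuousOn_pushforward (h : IsC1Flow F φ) (hK : ∀ t, MapsTo (φ t) K K)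
    (hW : ContinuousOn W K) (t : ℝ) : ContinuousOn (pushforward φ t W) K := by
  have hback : Continuous (φ (-t)) := (h.contDiff (-t)).continuous
  exact (h.continuous_fderiv.comp (continuous_const.prodMk hback)).continuousOn.clm_apply
    (hW.comp hback.continuousOn (hK (-t)))

theorem integrableOn_pushforward (h : IsC1Flow F φ) (hK : ∀ t, MapsTo (φ t) K K)
    (hW : ContinuousOn W K) (hbound : IntegrableOn bound (Ioi 0))
    (hdecay : ∀ t, 0 < t → ∀ z ∈ K, ‖fderiv ℝ (φ t) z (W z)‖ ≤ bound t) {x : E} (hx : x ∈ K) :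
    IntegrableOn (fun t => pushforward φ t W x) (Ioi 0) :=
  hbound.mono' (h.continuous_pushforward hK hW hx).aestronglyMeasurable
    (ae_restrict_of_forall_mem measurableSet_Ioi fun t ht => hdecay t ht _ (hK (-t) hx))

theorem continuousOn_integral_pushforward (h : IsC1Flow F φ) (hK : ∀ t, MapsTo (φ t) K K)
    (hW : ContinuousOn W K) (hbound : IntegrableOn bound (Ioi 0))
    (hdecay : ∀ t, 0 < t → ∀ z ∈ K, ‖fderiv ℝ (φ t) z (W z)‖ ≤ bound t) :
    ContinuousOn (fun x => ∫ t in Ioi 0, pushforward φ t W x) K :=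
  continuousOn_of_dominated
    (fun _ hx => (h.continuous_pushforward hK hW hx).aestronglyMeasurable)
    (fun _ hx => ae_restrict_of_forall_mem measurableSet_Ioi fun t ht =>
      hdecay t ht _ (hK (-t) hx))
    hbound (Eventually.of_forall fun t => h.continuousOn_pushforward hK hW t)

theorem integral_pushforward_apply [CompleteSpace E] (h : IsC1Flow F φ)
    (hK : ∀ t, MapsTo (φ t) K K) (hW : ContinuousOn W K) (hbound : IntegrableOn bound (Ioi 0))
    (hdecay : ∀ t, 0 < t → ∀ z ∈ K, ‖fderiv ℝ (φ t) z (W z)‖ ≤ bound t) {x : E} (hx : x ∈ K)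
    (s : ℝ) :
    ∫ τ in Ioi 0, pushforward φ τ W (φ s x) =
      fderiv ℝ (φ s) x (∫ r in Ioi (-s), pushforward φ r W x) := by
  have hint := (h.continuous_pushforward hK hW hx).integrableOn_Ioi_of_integrableOn_Ioi
    (h.integrableOn_pushforward hK hW hbound hdecay hx) (0 - s)
  simp_rw [h.pushforward_apply]
  rw [ContinuousLinearMap.integral_comp_comm _ (IntegrableOn.comp_sub_right_Ioi hint),
    setIntegral_Ioi_comp_sub_right (fun r => pushforward φ r W x), zero_sub]

theorem hasDerivAt_integral_pushforward [CompleteSpace E] (h : IsC1Flow F φ)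
    (hF : ContDiff ℝ 1 F) (hK : ∀ t, MapsTo (φ t) K K) (hW : ContinuousOn W K)
    (hbound : IntegrableOn bound (Ioi 0))
    (hdecay : ∀ t, 0 < t → ∀ z ∈ K, ‖fderiv ℝ (φ t) z (W z)‖ ≤ bound t) {x : E} (hx : x ∈ K)
    (t : ℝ) :
    HasDerivAt (fun s => ∫ τ in Ioi 0, pushforward φ τ W (φ s x))
      (fderiv ℝ F (φ t x) (∫ τ in Ioi 0, pushforward φ τ W (φ t x)) + W (φ t x)) t := by
  have hp := h.continuous_pushforward hK hW hx
  have htail : HasDerivAt (fun s => ∫ r in Ioi (-s), pushforward φ r W x)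
      (pushforward φ (-t) W x) t := by
    have hint := hp.integrableOn_Ioi_of_integrableOn_Ioi
      (h.integrableOn_pushforward hK hW hbound hdecay hx) (-t)
    simpa [comp_def] using (hasDerivAt_setIntegral_Ioi hp hint).scomp t (hasDerivAt_neg t)
  simp_rw [h.integral_pushforward_apply hK hW hbound hdecay hx]
  convert (h.hasDerivAt_fderiv hF x t).clm_apply htail using 1
  rw [h.fderiv_apply_pushforward_neg, ContinuousLinearMap.comp_apply]

theorem hasDerivAt_integral_pushforward_reverse [CompleteSpace E] (h : IsC1Flow F φ)
    (hF : ContDiff ℝ 1 F) (hK : ∀ t, MapsTo (φ t) K K) (hW : ContinuousOn W K)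
    (hbound : IntegrableOn bound (Ioi 0))
    (hdecay : ∀ t, 0 < t → ∀ z ∈ K, ‖fderiv ℝ (φ (-t)) z (W z)‖ ≤ bound t) {x : E} (hx : x ∈ K)
    (t : ℝ) :
    HasDerivAt (fun s => ∫ τ in Ioi 0, pushforward (fun r => φ (-r)) τ W (φ s x))
      (fderiv ℝ F (φ t x) (∫ τ in Ioi 0, pushforward (fun r => φ (-r)) τ W (φ t x)) - W (φ t x))
      t := by
  have := (h.reverse.hasDerivAt_integral_pushforward hF.neg (fun t => hK (-t)) hW hbound hdecay
    hx (-t)).scomp t (hasDerivAt_neg t)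
  simpa [comp_def, fderiv_neg, sub_eq_add_neg] using this

end IsC1Flow

theorem ContinuousOn.of_eq_smul {α : Type*} [TopologicalSpace α] {K : Set α} {f g : α → E}
    {η : α → ℝ} (hg : ContinuousOn g K) (hf : ContinuousOn f K) (hf0 : ∀ x ∈ K, f x ≠ 0)
    (h : ∀ x ∈ K, g x = η x • f x) : ContinuousOn η K := by
  intro x hx
  obtain ⟨ℓ, -, hℓ⟩ := exists_dual_vector ℝ (f x) (norm_ne_zero_iff.2 (hf0 x hx))
  have hℓg : ContinuousWithinAt (fun y => ℓ (g y)) K x :=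
    ℓ.continuous.continuousAt.comp_continuousWithinAt (hg x hx)
  have hℓf : ContinuousWithinAt (fun y => ℓ (f y)) K x :=
    ℓ.continuous.continuousAt.comp_continuousWithinAt (hf x hx)
  have hℓfx : ℓ (f x) ≠ 0 := by simpa [hℓ] using hf0 x hx
  have hquot : ∀ y ∈ K, ℓ (f y) ≠ 0 → η y = ℓ (g y) / ℓ (f y) := fun y hy hy0 => by
    rw [h y hy, map_smul, smul_eq_mul, mul_div_cancel_right₀ _ hy0]
  refine (hℓg.div hℓf hℓfx).congr_of_eventuallyEq ?_ (hquot x hx hℓfx)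
  filter_upwards [self_mem_nhdsWithin, hℓf.eventually_ne hℓfx] with y hy hy0
  exact hquot y hy hy0

end

theorem shadowing_pair_expansion_flow_general
    {E : Type*} [NormedAddCommGroup E] [NormedSpace ℝ E] [FiniteDimensional ℝ E]
    (F : E → E) (hF : ContDiff ℝ 2 F)
    (φ : ℝ → E → E)
    (hφ0 : ∀ x : E, φ 0 x = x)
    (hφadd : ∀ (s t : ℝ) (x : E), φ (s + t) x = φ s (φ t x))
    (hφode : ∀ (x : E) (t : ℝ), HasDerivAt (fun s => φ s x) (F (φ t x)) t)
    (hφC1 : ∀ t : ℝ, ContDiff ℝ 1 (φ t))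
    (hφD : Continuous fun p : ℝ × E => fderiv ℝ (φ p.1) p.2)
    (K : Set E) (hKc : IsCompact K) (hφK : ∀ t : ℝ, φ t '' K = K)
    (hFne : ∀ x ∈ K, F x ≠ 0)
    (Vs Vu Vc : E → Submodule ℝ E)
    (C lam : ℝ) (hC : 0 < C) (hlam0 : 0 < lam) (hlam1 : lam < 1)
    (hyps : ∀ t : ℝ, 0 ≤ t → ∀ x ∈ K, ∀ v ∈ Vs x, ‖fderiv ℝ (φ t) x v‖ ≤ C * lam ^ t * ‖v‖)
    (hypu : ∀ t : ℝ, 0 ≤ t → ∀ x ∈ K, ∀ v ∈ Vu x, ‖fderiv ℝ (φ (-t)) x v‖ ≤ C * lam ^ t * ‖v‖)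
    (Ps Pu Pc : E → E →L[ℝ] E)
    (hproj : ∀ x ∈ K, ∀ v : E, Ps x v ∈ Vs x ∧ Pu x v ∈ Vu x ∧ Pc x v ∈ Vc x ∧
      Ps x v + Pu x v + Pc x v = v)
    (hPsc : ContinuousOn Ps K) (hPuc : ContinuousOn Pu K) (hPcc : ContinuousOn Pc K)
    (X : E → E) (hXc : ContinuousOn X K)
    (η : E → ℝ) (hη : ∀ x ∈ K, Pc x (X x) = η x • F x)
    (v : E → E)
    (hv : ∀ x ∈ K, v x =
      (∫ t in Ioi (0:ℝ), fderiv ℝ (φ t) (φ (-t) x) (Ps (φ (-t) x) (X (φ (-t) x)))) -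
      ∫ t in Ioi (0:ℝ), fderiv ℝ (φ (-t)) (φ t x) (Pu (φ t x) (X (φ t x)))) :
    (∀ x ∈ K,
      IntegrableOn (fun t : ℝ => fderiv ℝ (φ t) (φ (-t) x) (Ps (φ (-t) x) (X (φ (-t) x))))
        (Ioi (0:ℝ)) ∧
      IntegrableOn (fun t : ℝ => fderiv ℝ (φ (-t)) (φ t x) (Pu (φ t x) (X (φ t x))))
        (Ioi (0:ℝ))) ∧
    (∃ M : ℝ, ∀ x ∈ K, ‖v x‖ ≤ M ∧ |η x| ≤ M) ∧
    ContinuousOn v K ∧ ContinuousOn η K ∧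
    (∀ x₀ ∈ K, ∀ t : ℝ,
      HasDerivAt (fun s => v (φ s x₀))
        (fderiv ℝ F (φ t x₀) (v (φ t x₀)) - η (φ t x₀) • F (φ t x₀) + X (φ t x₀)) t) := by
  have hflow : IsC1Flow F φ := ⟨hφ0, hφadd, hφode, hφC1, hφD⟩
  have hF1 : ContDiff ℝ 1 F := hF.of_le (by norm_num)
  have hK : ∀ t, MapsTo (φ t) K K := fun t x hx => hφK t ▸ mem_image_of_mem (φ t) hx
  have hWs : ContinuousOn (fun y => Ps y (X y)) K := hPsc.clm_apply hXc
  have hWu : ContinuousOn (fun y => Pu y (X y)) K := hPuc.clm_apply hXc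
  obtain ⟨Ms, hMs⟩ := hKc.exists_bound_of_continuousOn hWs
  obtain ⟨Mu, hMu⟩ := hKc.exists_bound_of_continuousOn hWu
  have hrate : ∀ t : ℝ, 0 ≤ C * lam ^ t :=
    fun t => (mul_pos hC (Real.rpow_pos_of_pos hlam0 t)).le
  have hbound : ∀ M, IntegrableOn (fun t : ℝ => C * lam ^ t * M) (Ioi 0) := fun M =>
    ((integrableOn_Ioi_rpow_of_lt_one hlam0 hlam1 0).const_mul C).mul_const M
  have hdecs : ∀ t, 0 < t → ∀ z ∈ K, ‖fderiv ℝ (φ t) z (Ps z (X z))‖ ≤ C * lam ^ t * Ms :=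
    fun t ht z hz => (hyps t ht.le z hz _ (hproj z hz _).1).trans
      (mul_le_mul_of_nonneg_left (hMs z hz) (hrate t))
  have hdecu : ∀ t, 0 < t → ∀ z ∈ K, ‖fderiv ℝ (φ (-t)) z (Pu z (X z))‖ ≤ C * lam ^ t * Mu :=
    fun t ht z hz => (hypu t ht.le z hz _ (hproj z hz _).2.1).trans
      (mul_le_mul_of_nonneg_left (hMu z hz) (hrate t))
  have hvK : EqOn v (fun x => (∫ t in Ioi 0, pushforward φ t (fun y => Ps y (X y)) x) -
      ∫ t in Ioi 0, pushforward (fun r => φ (-r)) t (fun y => Pu y (X y)) x) K := fun x hx => by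
    simp only [pushforward_reverse]
    exact hv x hx
  have hvc : ContinuousOn v K :=
    ((hflow.continuousOn_integral_pushforward hK hWs (hbound Ms) hdecs).sub
      (hflow.reverse.continuousOn_integral_pushforward (fun t => hK (-t)) hWu (hbound Mu)
        hdecu)).congr hvK
  have hηc : ContinuousOn η K :=
    (hPcc.clm_apply hXc).of_eq_smul hF.continuous.continuousOn hFne hη
  obtain ⟨Mv, hMv⟩ := hKc.exists_bound_of_continuousOn hvc
  obtain ⟨Mη, hMη⟩ := hKc.exists_bound_of_continuousOn hηc
  refine ⟨fun x hx => ⟨hflow.integrableOn_pushforward hK hWs (hbound Ms) hdecs hx, ?_⟩,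
    ⟨max Mv Mη, fun x hx => ⟨(hMv x hx).trans (le_max_left _ _),
      (hMη x hx).trans (le_max_right _ _)⟩⟩, hvc, hηc, fun x₀ hx₀ t => ?_⟩
  · simpa only [pushforward_reverse] using hflow.reverse.integrableOn_pushforward
      (fun t => hK (-t)) hWu (hbound Mu) hdecu hx
  have hsplit := (hproj _ (hK t hx₀) (X (φ t x₀))).2.2.2
  rw [hη _ (hK t hx₀)] at hsplit
  have hderiv := (hflow.hasDerivAt_integral_pushforward hF1 hK hWs (hbound Ms) hdecs hx₀ t).sub
    (hflow.hasDerivAt_integral_pushforward_reverse hF1 hK hWu (hbound Mu) hdecu hx₀ t)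
  refine (hderiv.congr_of_eventuallyEq
    (Eventually.of_forall fun s => hvK (hK s hx₀))).congr_deriv ?_
  rw [hvK (hK t hx₀), map_sub]
  linear_combination (norm := module) hsplit

theorem shadowing_pair_expansion_flow
    {E : Type*} [NormedAddCommGroup E] [NormedSpace ℝ E] [FiniteDimensional ℝ E]
    (F : E → E) (hF : ContDiff ℝ 2 F)
    (φ : ℝ → E → E)
    (hφ0 : ∀ x : E, φ 0 x = x)
    (hφadd : ∀ (s t : ℝ) (x : E), φ (s + t) x = φ s (φ t x))
    (hφode : ∀ (x : E) (t : ℝ), HasDerivAt (fun s => φ s x) (F (φ t x)) t)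
    (hφC1 : ∀ t : ℝ, ContDiff ℝ 1 (φ t))
    (hφD : Continuous fun p : ℝ × E => fderiv ℝ (φ p.1) p.2)
    (K : Set E) (hKc : IsCompact K) (hφK : ∀ t : ℝ, φ t '' K = K)
    (hFne : ∀ x ∈ K, F x ≠ 0)
    (Vs Vu Vc : E → Submodule ℝ E)
    (hVc : ∀ x ∈ K, Vc x = Submodule.span ℝ {F x})
    (hequivs : ∀ (t : ℝ), ∀ x ∈ K, (Vs x).map (fderiv ℝ (φ t) x : E →ₗ[ℝ] E) = Vs (φ t x))
    (hequivu : ∀ (t : ℝ), ∀ x ∈ K, (Vu x).map (fderiv ℝ (φ t) x : E →ₗ[ℝ] E) = Vu (φ t x))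
    (hequivc : ∀ (t : ℝ), ∀ x ∈ K, (Vc x).map (fderiv ℝ (φ t) x : E →ₗ[ℝ] E) = Vc (φ t x))
    (C lam : ℝ) (hC : 0 < C) (hlam0 : 0 < lam) (hlam1 : lam < 1)
    (hyps : ∀ t : ℝ, 0 ≤ t → ∀ x ∈ K, ∀ v ∈ Vs x, ‖fderiv ℝ (φ t) x v‖ ≤ C * lam ^ t * ‖v‖)
    (hypu : ∀ t : ℝ, 0 ≤ t → ∀ x ∈ K, ∀ v ∈ Vu x, ‖fderiv ℝ (φ (-t)) x v‖ ≤ C * lam ^ t * ‖v‖)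
    (Ps Pu Pc : E → E →L[ℝ] E)
    (hproj : ∀ x ∈ K, ∀ v : E, Ps x v ∈ Vs x ∧ Pu x v ∈ Vu x ∧ Pc x v ∈ Vc x ∧
      Ps x v + Pu x v + Pc x v = v)
    (hdirect : ∀ x ∈ K, ∀ vs ∈ Vs x, ∀ vu ∈ Vu x, ∀ vc ∈ Vc x,
      vs + vu + vc = 0 → vs = 0 ∧ vu = 0 ∧ vc = 0)
    (hPbdd : ∃ M : ℝ, ∀ x ∈ K, ‖Ps x‖ + ‖Pu x‖ + ‖Pc x‖ ≤ M)
    (hPsc : ContinuousOn Ps K) (hPuc : ContinuousOn Pu K) (hPcc : ContinuousOn Pc K)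
    (X : E → E) (hXc : ContinuousOn X K)
    (η : E → ℝ) (hη : ∀ x ∈ K, Pc x (X x) = η x • F x)
    (v : E → E)
    (hv : ∀ x ∈ K, v x =
      (∫ t in Ioi (0:ℝ), fderiv ℝ (φ t) (φ (-t) x) (Ps (φ (-t) x) (X (φ (-t) x)))) -
      ∫ t in Ioi (0:ℝ), fderiv ℝ (φ (-t)) (φ t x) (Pu (φ t x) (X (φ t x)))) :
    (∀ x ∈ K,
      IntegrableOn (fun t : ℝ => fderiv ℝ (φ t) (φ (-t) x) (Ps (φ (-t) x) (X (φ (-t) x))))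
        (Ioi (0:ℝ)) ∧
      IntegrableOn (fun t : ℝ => fderiv ℝ (φ (-t)) (φ t x) (Pu (φ t x) (X (φ t x))))
        (Ioi (0:ℝ))) ∧
    (∃ M : ℝ, ∀ x ∈ K, ‖v x‖ ≤ M ∧ |η x| ≤ M) ∧
    ContinuousOn v K ∧ ContinuousOn η K ∧
    (∀ x₀ ∈ K, ∀ t : ℝ,
      HasDerivAt (fun s => v (φ s x₀))
        (fderiv ℝ F (φ t x₀) (v (φ t x₀)) - η (φ t x₀) • F (φ t x₀) + X (φ t x₀)) t) :=
  shadowing_pair_expansion_flow_general F hF φ hφ0 hφadd hφode hφC1 hφD K hKc hφK hFne Vs Vu Vc C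
    lam hC hlam0 hlam1 hyps hypu Ps Pu Pc hproj hPsc hPuc hPcc X hXc η hη v hv
end

section
/- (Uniqueness of the shadowing covector for flows.) Let x_t := φ^t(x₀) be an orbit in K and ω a bounded continuous covector field on K. Suppose ν¹, ν² : ℝ → E* are differentiable, bounded, both satisfy the inhomogeneous adjoint ODE d/dt ν_t = −ν_t ∘ DF(x_t) − ω(x_t) for all t ∈ ℝ, and ν¹_τ(F(x_τ)) = ν²_τ(F(x_τ)) for some single time τ ∈ ℝ. Then ν¹_t = ν²_t for all t ∈ ℝ. -/
open Function Set Filter MeasureTheory Topology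

/-!
The difference `μ = ν₁ - ν₂` solves the homogeneous adjoint variational equation
`μ' = -μ ∘ DF(x_t)`, while `Ψ_t = Dφ^t(x₀)` solves `Ψ' = DF(x_t) ∘ Ψ`; hence `μ_t (Ψ_t v)` does not
depend on `t`. Since `μ` is bounded, the exponential contraction of `Ψ_t` on `V^s(x₀)` as
`t → ∞` and on `V^u(x₀)` as `t → -∞` forces `μ_0` to vanish on both subspaces. On
`V^c(x₀) = span F(x₀)` it vanishes because `Ψ_τ F(x₀) = F(x_τ)` and `μ_τ (F(x_τ)) = 0`.
So `μ_0 = 0`, and as every `Ψ_t` is invertible, `μ_t = 0` for all `t`.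
-/

section JointContinuity

variable {T E G : Type*} [TopologicalSpace T] [NormedAddCommGroup E] [NormedSpace ℝ E]
  [NormedAddCommGroup G] [NormedSpace ℝ G]

/-- Near `(t, y)` the maps `φ s` are uniformly Lipschitz on a small ball, by the mean value
inequality, so continuity in `t` upgrades to joint continuity. -/
theorem continuous_uncurry_of_continuous_fderiv {φ : T → E → G}
    (hdiff : ∀ t, Differentiable ℝ (φ t)) (hcont : ∀ x, Continuous fun t => φ t x)
    (hD : Continuous fun p : T × E => fderiv ℝ (φ p.1) p.2) :
    Continuous fun p : T × E => φ p.1 p.2 := by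
  refine continuous_iff_continuousAt.2 fun ⟨t, y⟩ => ?_
  set L := ‖fderiv ℝ (φ t) y‖₊ + 1
  obtain ⟨U, hU, V, hV, hUV⟩ := mem_nhds_prod_iff.1 <|
    hD.nnnorm.continuousAt.eventually (gt_mem_nhds (lt_add_one ‖fderiv ℝ (φ t) y‖₊))
  obtain ⟨r, hr, hrV⟩ := Metric.mem_nhds_iff.1 hV
  have hlip : ∀ s ∈ U, LipschitzOnWith L (φ s) (Metric.ball y r) := fun s hs =>
    Convex.lipschitzOnWith_of_nnnorm_fderiv_le (fun x _ => (hdiff s).differentiableAt)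
      (fun x hx => (hUV (show (s, x) ∈ U ×ˢ V from ⟨hs, hrV hx⟩)).le) (convex_ball y r)
  have hon : ContinuousOn (fun q : T × E => φ q.1 q.2) (U ×ˢ Metric.ball y r) :=
    continuousOn_prod_of_continuousOn_lipschitzOnWith' _ L hlip fun x _ => (hcont x).continuousOn
  exact hon.continuousAt (prod_mem_nhds hU (Metric.ball_mem_nhds y hr))

end JointContinuity

section Flow

variable {E : Type*} [NormedAddCommGroup E] [NormedSpace ℝ E] {F : E → E} {φ : ℝ → E → E}

theorem continuous_fderiv_comp_fderiv_flow (hF : ContDiff ℝ 1 F)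
    (hφode : ∀ (x : E) (t : ℝ), HasDerivAt (fun s => φ s x) (F (φ t x)) t)
    (hφdiff : ∀ t, Differentiable ℝ (φ t))
    (hφD : Continuous fun p : ℝ × E => fderiv ℝ (φ p.1) p.2) :
    Continuous fun p : ℝ × E => (fderiv ℝ F (φ p.1 p.2)).comp (fderiv ℝ (φ p.1) p.2) := by
  have hφ : Continuous fun p : ℝ × E => φ p.1 p.2 :=
    continuous_uncurry_of_continuous_fderiv hφdiff
      (fun x => continuous_iff_continuousAt.2 fun t => (hφode x t).continuousAt) hφD
  exact ((hF.continuous_fderiv one_ne_zero).comp hφ).clm_comp hφD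

/-- Differentiating `φ h x = x + ∫₀ʰ F (φ s x) ds` in `x` under the integral sign. -/
theorem fderiv_flow_eq_id_add_integral [FiniteDimensional ℝ E] (hF : ContDiff ℝ 1 F)
    (hφ0 : ∀ x : E, φ 0 x = x)
    (hφode : ∀ (x : E) (t : ℝ), HasDerivAt (fun s => φ s x) (F (φ t x)) t)
    (hφdiff : ∀ t, Differentiable ℝ (φ t))
    (hφD : Continuous fun p : ℝ × E => fderiv ℝ (φ p.1) p.2) (y : E) (h : ℝ) :
    fderiv ℝ (φ h) y = ContinuousLinearMap.id ℝ E +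
      ∫ s in (0 : ℝ)..h, (fderiv ℝ F (φ s y)).comp (fderiv ℝ (φ s) y) := by
  have hB := continuous_fderiv_comp_fderiv_flow hF hφode hφdiff hφD
  have hFφ : ∀ x, Continuous fun s => F (φ s x) := fun x =>
    hF.continuous.comp (continuous_iff_continuousAt.2 fun t => (hφode x t).continuousAt)
  have hint : ∀ x, ∫ s in (0 : ℝ)..h, F (φ s x) = φ h x - x := fun x => by
    rw [intervalIntegral.integral_eq_sub_of_hasDerivAt (fun s _ => hφode x s)
      ((hFφ x).intervalIntegrable 0 h), hφ0]
  obtain ⟨M, hM⟩ := (isCompact_uIcc.prod (isCompact_closedBall y 1)).exists_bound_of_continuousOn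
    hB.continuousOn
  have hderiv : HasFDerivAt (fun x => ∫ s in (0 : ℝ)..h, F (φ s x))
      (∫ s in (0 : ℝ)..h, (fderiv ℝ F (φ s y)).comp (fderiv ℝ (φ s) y)) y := by
    refine intervalIntegral.hasFDerivAt_integral_of_dominated_of_fderiv_le
      (bound := fun _ => M) (Metric.ball_mem_nhds y one_pos)
      (Eventually.of_forall fun x => (hFφ x).aestronglyMeasurable)
      ((hFφ y).intervalIntegrable 0 h)
      (hB.comp (continuous_id.prodMk continuous_const)).aestronglyMeasurable
      (ae_of_all _ fun s hs x hx =>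
        hM (s, x) ⟨uIoc_subset_uIcc hs, Metric.ball_subset_closedBall hx⟩)
      intervalIntegrable_const (ae_of_all _ fun s _ x _ => ?_)
    exact (hF.differentiable one_ne_zero (φ s x)).hasFDerivAt.comp x (hφdiff s x).hasFDerivAt
  have hderiv' : HasFDerivAt (fun x => ∫ s in (0 : ℝ)..h, F (φ s x))
      (fderiv ℝ (φ h) y - ContinuousLinearMap.id ℝ E) y := by
    simp_rw [hint]
    exact (hφdiff h y).hasFDerivAt.sub (hasFDerivAt_id y)
  rw [← hderiv'.unique hderiv]
  abel

theorem hasDerivAt_fderiv_flow [FiniteDimensional ℝ E] (hF : ContDiff ℝ 1 F)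
    (hφ0 : ∀ x : E, φ 0 x = x)
    (hφode : ∀ (x : E) (t : ℝ), HasDerivAt (fun s => φ s x) (F (φ t x)) t)
    (hφdiff : ∀ t, Differentiable ℝ (φ t))
    (hφD : Continuous fun p : ℝ × E => fderiv ℝ (φ p.1) p.2) (y : E) (t : ℝ) :
    HasDerivAt (fun s => fderiv ℝ (φ s) y) ((fderiv ℝ F (φ t y)).comp (fderiv ℝ (φ t) y)) t := by
  have hB : Continuous fun s => (fderiv ℝ F (φ s y)).comp (fderiv ℝ (φ s) y) :=
    (continuous_fderiv_comp_fderiv_flow hF hφode hφdiff hφD).comp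
      (continuous_id.prodMk continuous_const)
  have hI := (intervalIntegral.integral_hasDerivAt_right (hB.intervalIntegrable 0 t)
    (hB.stronglyMeasurableAtFilter _ _) hB.continuousAt).const_add (ContinuousLinearMap.id ℝ E)
  exact hI.congr_of_eventuallyEq
    (Eventually.of_forall (fderiv_flow_eq_id_add_integral hF hφ0 hφode hφdiff hφD y))

theorem fderiv_flow_surjective (hφ0 : ∀ x : E, φ 0 x = x)
    (hφadd : ∀ (s t : ℝ) (x : E), φ (s + t) x = φ s (φ t x))
    (hφdiff : ∀ t, Differentiable ℝ (φ t)) (t : ℝ) (x : E) :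
    Surjective (fderiv ℝ (φ t) x) := by
  have hx : φ (-t) (φ t x) = x := by rw [← hφadd, neg_add_cancel, hφ0]
  have hid : φ t ∘ φ (-t) = id := funext fun z => by
    rw [comp_apply, ← hφadd, add_neg_cancel, hφ0, id]
  have hchain := fderiv_comp (φ t x) (hφdiff t (φ (-t) (φ t x))) (hφdiff (-t) (φ t x))
  rw [hid, fderiv_id, hx] at hchain
  refine Surjective.of_comp (g := fderiv ℝ (φ (-t)) (φ t x)) ?_
  rw [← ContinuousLinearMap.coe_comp, ← hchain]
  exact surjective_id

/-- Differentiate `s ↦ φ t (φ s x) = φ (t + s) x` at `s = 0`. -/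
theorem fderiv_flow_apply_vectorField (hφ0 : ∀ x : E, φ 0 x = x)
    (hφadd : ∀ (s t : ℝ) (x : E), φ (s + t) x = φ s (φ t x))
    (hφode : ∀ (x : E) (t : ℝ), HasDerivAt (fun s => φ s x) (F (φ t x)) t)
    (hφdiff : ∀ t, Differentiable ℝ (φ t)) (t : ℝ) (x : E) :
    fderiv ℝ (φ t) x (F x) = F (φ t x) := by
  have h₁ : HasDerivAt (fun s => φ t (φ s x)) (fderiv ℝ (φ t) x (F x)) 0 := by
    have := (hφdiff t (φ 0 x)).hasFDerivAt.comp_hasDerivAt 0 (hφode x 0)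
    simpa only [hφ0, comp_def] using this
  have h₂ : HasDerivAt (fun s => φ t (φ s x)) (F (φ t x)) 0 := by
    simp_rw [← hφadd]
    exact HasDerivAt.comp_const_add t 0 (by simpa only [add_zero] using hφode x t)
  exact h₁.unique h₂

end Flow

section Adjoint

variable {E : Type*} [NormedAddCommGroup E] [NormedSpace ℝ E]

theorem apply_apply_eq_of_hasDerivAt_adjoint {A Ψ : ℝ → E →L[ℝ] E} {μ : ℝ → E →L[ℝ] ℝ}
    (hμ : ∀ t, HasDerivAt μ (-(μ t).comp (A t)) t)
    (hΨ : ∀ t, HasDerivAt Ψ ((A t).comp (Ψ t)) t) (v : E) (s t : ℝ) :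
    μ s (Ψ s v) = μ t (Ψ t v) := by
  have hd : ∀ r, HasDerivAt (fun r => μ r (Ψ r v)) 0 r := fun r => by
    simpa using (hμ r).clm_apply ((hΨ r).clm_apply (hasDerivAt_const r v))
  exact is_const_of_deriv_eq_zero (fun r => (hd r).differentiableAt) (fun r => (hd r).deriv) s t

theorem eq_zero_of_bounded_of_contracting {μ : ℝ → E →L[ℝ] ℝ} {Ψ : ℝ → E →L[ℝ] E}
    {v : E} {M C lam c : ℝ} (hμ : ∀ t, ‖μ t‖ ≤ M) (hlam₀ : -1 < lam) (hlam₁ : lam < 1)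
    (hΨ : ∀ t, 0 ≤ t → ‖Ψ t v‖ ≤ C * lam ^ t * ‖v‖) (hc : ∀ t, μ t (Ψ t v) = c) :
    c = 0 := by
  have hM : 0 ≤ M := (norm_nonneg _).trans (hμ 0)
  have hbound : ∀ t : ℝ, 0 ≤ t → ‖c‖ ≤ M * C * ‖v‖ * lam ^ t := fun t ht =>
    calc ‖c‖ = ‖μ t (Ψ t v)‖ := by rw [hc t]
      _ ≤ ‖μ t‖ * ‖Ψ t v‖ := (μ t).le_opNorm _
      _ ≤ M * (C * lam ^ t * ‖v‖) := mul_le_mul (hμ t) (hΨ t ht) (norm_nonneg _) hM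
      _ = M * C * ‖v‖ * lam ^ t := by ring
  have hlim : Tendsto (fun t : ℝ => M * C * ‖v‖ * lam ^ t) atTop (𝓝 0) := by
    simpa using (tendsto_rpow_atTop_of_base_lt_one lam hlam₀ hlam₁).const_mul (M * C * ‖v‖)
  exact norm_le_zero_iff.1 (ge_of_tendsto hlim ((eventually_ge_atTop 0).mono hbound))

end Adjoint

theorem adjoint_variational_solution_eq_zero {E : Type*} [NormedAddCommGroup E]
    [NormedSpace ℝ E] [FiniteDimensional ℝ E] {F : E → E} {φ : ℝ → E → E}
    (hF : ContDiff ℝ 1 F) (hφ0 : ∀ x : E, φ 0 x = x)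
    (hφadd : ∀ (s t : ℝ) (x : E), φ (s + t) x = φ s (φ t x))
    (hφode : ∀ (x : E) (t : ℝ), HasDerivAt (fun s => φ s x) (F (φ t x)) t)
    (hφdiff : ∀ t, Differentiable ℝ (φ t))
    (hφD : Continuous fun p : ℝ × E => fderiv ℝ (φ p.1) p.2)
    {x₀ : E} {Vs Vu : Submodule ℝ E} (hspan : Vs ⊔ Vu ⊔ Submodule.span ℝ {F x₀} = ⊤)
    {C lam : ℝ} (hlam₀ : -1 < lam) (hlam₁ : lam < 1)
    (hs : ∀ t : ℝ, 0 ≤ t → ∀ v ∈ Vs, ‖fderiv ℝ (φ t) x₀ v‖ ≤ C * lam ^ t * ‖v‖)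
    (hu : ∀ t : ℝ, 0 ≤ t → ∀ v ∈ Vu, ‖fderiv ℝ (φ (-t)) x₀ v‖ ≤ C * lam ^ t * ‖v‖)
    {μ : ℝ → E →L[ℝ] ℝ} {M : ℝ} (hμb : ∀ t, ‖μ t‖ ≤ M)
    (hμ : ∀ t, HasDerivAt μ (-(μ t).comp (fderiv ℝ F (φ t x₀))) t)
    {τ : ℝ} (hτ : μ τ (F (φ τ x₀)) = 0) (t : ℝ) : μ t = 0 := by
  have hpair : ∀ v t, μ t (fderiv ℝ (φ t) x₀ v) = μ 0 v := fun v t => by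
    have hid : φ 0 = id := funext hφ0
    simpa [hid] using apply_apply_eq_of_hasDerivAt_adjoint hμ
      (hasDerivAt_fderiv_flow hF hφ0 hφode hφdiff hφD x₀) v t 0
  have hker : Vs ⊔ Vu ⊔ Submodule.span ℝ {F x₀} ≤ LinearMap.ker (μ 0 : E →ₗ[ℝ] ℝ) := by
    refine sup_le (sup_le (fun v hv => ?_) (fun v hv => ?_)) ?_
    · exact eq_zero_of_bounded_of_contracting hμb hlam₀ hlam₁ (fun t ht => hs t ht v hv)
        (hpair v)
    · exact eq_zero_of_bounded_of_contracting (μ := fun t => μ (-t)) (fun t => hμb (-t))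
        hlam₀ hlam₁ (fun t ht => hu t ht v hv) (fun t => hpair v (-t))
    · rw [Submodule.span_singleton_le_iff_mem, LinearMap.mem_ker, ContinuousLinearMap.coe_coe,
        ← hpair _ τ, fderiv_flow_apply_vectorField hφ0 hφadd hφode hφdiff, hτ]
  have hμ₀ : μ 0 = 0 := by
    ext v
    exact hker (hspan ▸ Submodule.mem_top)
  ext u
  obtain ⟨v, rfl⟩ := fderiv_flow_surjective hφ0 hφadd hφdiff t x₀ u
  rw [hpair, hμ₀]
  rfl

theorem adjoint_shadowing_uniqueness_flow_general
    {E : Type*} [NormedAddCommGroup E] [NormedSpace ℝ E] [FiniteDimensional ℝ E]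
    (F : E → E) (hF : ContDiff ℝ 2 F)
    (φ : ℝ → E → E)
    (hφ0 : ∀ x : E, φ 0 x = x)
    (hφadd : ∀ (s t : ℝ) (x : E), φ (s + t) x = φ s (φ t x))
    (hφode : ∀ (x : E) (t : ℝ), HasDerivAt (fun s => φ s x) (F (φ t x)) t)
    (hφC1 : ∀ t : ℝ, ContDiff ℝ 1 (φ t))
    (hφD : Continuous fun p : ℝ × E => fderiv ℝ (φ p.1) p.2)
    (K : Set E)
    (Vs Vu Vc : E → Submodule ℝ E)
    (hVc : ∀ x ∈ K, Vc x = Submodule.span ℝ {F x})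
    (C lam : ℝ) (hlam0 : 0 < lam) (hlam1 : lam < 1)
    (hyps : ∀ t : ℝ, 0 ≤ t → ∀ x ∈ K, ∀ v ∈ Vs x, ‖fderiv ℝ (φ t) x v‖ ≤ C * lam ^ t * ‖v‖)
    (hypu : ∀ t : ℝ, 0 ≤ t → ∀ x ∈ K, ∀ v ∈ Vu x, ‖fderiv ℝ (φ (-t)) x v‖ ≤ C * lam ^ t * ‖v‖)
    (Ps Pu Pc : E → E →L[ℝ] E)
    (hproj : ∀ x ∈ K, ∀ v : E, Ps x v ∈ Vs x ∧ Pu x v ∈ Vu x ∧ Pc x v ∈ Vc x ∧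
      Ps x v + Pu x v + Pc x v = v)
    (x₀ : E) (hx₀ : x₀ ∈ K)
    (ω : E → E →L[ℝ] ℝ)
    (ν₁ ν₂ : ℝ → E →L[ℝ] ℝ)
    (hν₁b : ∃ M : ℝ, ∀ t : ℝ, ‖ν₁ t‖ ≤ M) (hν₂b : ∃ M : ℝ, ∀ t : ℝ, ‖ν₂ t‖ ≤ M)
    (hode₁ : ∀ t : ℝ,
      HasDerivAt ν₁ (-(ν₁ t).comp (fderiv ℝ F (φ t x₀)) - ω (φ t x₀)) t)
    (hode₂ : ∀ t : ℝ,
      HasDerivAt ν₂ (-(ν₂ t).comp (fderiv ℝ F (φ t x₀)) - ω (φ t x₀)) t)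
    (τ : ℝ) (hτ : ν₁ τ (F (φ τ x₀)) = ν₂ τ (F (φ τ x₀))) :
    ∀ t : ℝ, ν₁ t = ν₂ t := by
  obtain ⟨M₁, hM₁⟩ := hν₁b
  obtain ⟨M₂, hM₂⟩ := hν₂b
  have hspan : Vs x₀ ⊔ Vu x₀ ⊔ Submodule.span ℝ {F x₀} = ⊤ := by
    refine eq_top_iff.2 fun v _ => ?_
    obtain ⟨hvs, hvu, hvc, hsum⟩ := hproj x₀ hx₀ v
    rw [← hVc x₀ hx₀, ← hsum]
    exact add_mem (add_mem (Submodule.mem_sup_left (Submodule.mem_sup_left hvs))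
      (Submodule.mem_sup_left (Submodule.mem_sup_right hvu))) (Submodule.mem_sup_right hvc)
  have hμ : ∀ t : ℝ, HasDerivAt (fun s => ν₁ s - ν₂ s)
      (-(ν₁ t - ν₂ t).comp (fderiv ℝ F (φ t x₀))) t := fun t =>
    ((hode₁ t).sub (hode₂ t)).congr_deriv <| by
      ext
      simp only [sub_apply, neg_apply, ContinuousLinearMap.comp_apply]
      ring
  intro t
  exact sub_eq_zero.1 <| adjoint_variational_solution_eq_zero (hF.of_le one_le_two) hφ0 hφadd
    hφode (fun t => (hφC1 t).differentiable one_ne_zero) hφD hspan (by linarith) hlam1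
    (fun t ht => hyps t ht x₀ hx₀) (fun t ht => hypu t ht x₀ hx₀)
    (fun t => (norm_sub_le _ _).trans (add_le_add (hM₁ t) (hM₂ t))) hμ
    (τ := τ) (by rw [sub_apply, hτ, sub_self]) t

theorem adjoint_shadowing_uniqueness_flow
    {E : Type*} [NormedAddCommGroup E] [NormedSpace ℝ E] [FiniteDimensional ℝ E]
    (F : E → E) (hF : ContDiff ℝ 2 F)
    (φ : ℝ → E → E)
    (hφ0 : ∀ x : E, φ 0 x = x)
    (hφadd : ∀ (s t : ℝ) (x : E), φ (s + t) x = φ s (φ t x))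
    (hφode : ∀ (x : E) (t : ℝ), HasDerivAt (fun s => φ s x) (F (φ t x)) t)
    (hφC1 : ∀ t : ℝ, ContDiff ℝ 1 (φ t))
    (hφD : Continuous fun p : ℝ × E => fderiv ℝ (φ p.1) p.2)
    (K : Set E) (hKc : IsCompact K) (hφK : ∀ t : ℝ, φ t '' K = K)
    (hFne : ∀ x ∈ K, F x ≠ 0)
    (Vs Vu Vc : E → Submodule ℝ E)
    (hVc : ∀ x ∈ K, Vc x = Submodule.span ℝ {F x})
    (hequivs : ∀ (t : ℝ), ∀ x ∈ K, (Vs x).map (fderiv ℝ (φ t) x : E →ₗ[ℝ] E) = Vs (φ t x))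
    (hequivu : ∀ (t : ℝ), ∀ x ∈ K, (Vu x).map (fderiv ℝ (φ t) x : E →ₗ[ℝ] E) = Vu (φ t x))
    (hequivc : ∀ (t : ℝ), ∀ x ∈ K, (Vc x).map (fderiv ℝ (φ t) x : E →ₗ[ℝ] E) = Vc (φ t x))
    (C lam : ℝ) (hC : 0 < C) (hlam0 : 0 < lam) (hlam1 : lam < 1)
    (hyps : ∀ t : ℝ, 0 ≤ t → ∀ x ∈ K, ∀ v ∈ Vs x, ‖fderiv ℝ (φ t) x v‖ ≤ C * lam ^ t * ‖v‖)
    (hypu : ∀ t : ℝ, 0 ≤ t → ∀ x ∈ K, ∀ v ∈ Vu x, ‖fderiv ℝ (φ (-t)) x v‖ ≤ C * lam ^ t * ‖v‖)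
    (Ps Pu Pc : E → E →L[ℝ] E)
    (hproj : ∀ x ∈ K, ∀ v : E, Ps x v ∈ Vs x ∧ Pu x v ∈ Vu x ∧ Pc x v ∈ Vc x ∧
      Ps x v + Pu x v + Pc x v = v)
    (hdirect : ∀ x ∈ K, ∀ vs ∈ Vs x, ∀ vu ∈ Vu x, ∀ vc ∈ Vc x,
      vs + vu + vc = 0 → vs = 0 ∧ vu = 0 ∧ vc = 0)
    (hPbdd : ∃ M : ℝ, ∀ x ∈ K, ‖Ps x‖ + ‖Pu x‖ + ‖Pc x‖ ≤ M)
    (x₀ : E) (hx₀ : x₀ ∈ K)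
    (ω : E → E →L[ℝ] ℝ) (hωc : ContinuousOn ω K) (hωb : ∃ M : ℝ, ∀ x ∈ K, ‖ω x‖ ≤ M)
    (ν₁ ν₂ : ℝ → E →L[ℝ] ℝ)
    (hν₁b : ∃ M : ℝ, ∀ t : ℝ, ‖ν₁ t‖ ≤ M) (hν₂b : ∃ M : ℝ, ∀ t : ℝ, ‖ν₂ t‖ ≤ M)
    (hode₁ : ∀ t : ℝ,
      HasDerivAt ν₁ (-(ν₁ t).comp (fderiv ℝ F (φ t x₀)) - ω (φ t x₀)) t)
    (hode₂ : ∀ t : ℝ,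
      HasDerivAt ν₂ (-(ν₂ t).comp (fderiv ℝ F (φ t x₀)) - ω (φ t x₀)) t)
    (τ : ℝ) (hτ : ν₁ τ (F (φ τ x₀)) = ν₂ τ (F (φ τ x₀))) :
    ∀ t : ℝ, ν₁ t = ν₂ t :=
  adjoint_shadowing_uniqueness_flow_general F hF φ hφ0 hφadd hφode hφC1 hφD K Vs Vu Vc hVc C lam
    hlam0 hlam1 hyps hypu Ps Pu Pc hproj x₀ hx₀ ω ν₁ ν₂ hν₁b hν₂b hode₁ hode₂ τ hτ
end
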